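/- arXiv:1905.02266 — 6 statements merged into one kernel-verified Lean document; each statement's English description precedes it below -/
import Mathlib

section
/- A graph G has a clique forest (a spanning forest of its clique graph satisfying the clique-intersection property) if and only if G is chordal. -/
open SimpleGraph

/-- A graph is chordal if every cycle of length ≥ 4 has a chord: an edge of the
graph between two vertices of the cycle that is not an edge of the cycle. -/
def IsChordal {V : Type*} (G : SimpleGraph V) : Prop :=
  ∀ (v : V) (w : G.Walk v v), w.IsCycle → 4 ≤ w.length →
    ∃ a b, a ∈ w.support ∧ b ∈ w.support ∧ G.Adj a b ∧ s(a, b) ∉ w.edges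

/-- A maximal complete set of vertices. -/
def IsMaxClique {V : Type*} (G : SimpleGraph V) (s : Set V) : Prop :=
  G.IsClique s ∧ ∀ t : Set V, G.IsClique t → s ⊆ t → t = s

/-- The clique graph: vertices are the maximal cliques of `G`, with an edge between
two distinct cliques whenever their intersection is nonempty. -/
def cliqueGraph {V : Type*} (G : SimpleGraph V) :
    SimpleGraph {s : Set V // IsMaxClique G s} :=
  SimpleGraph.fromRel (fun c d => ((c : Set V) ∩ (d : Set V)).Nonempty)

/-!
Clique forest ⇒ chordal: the maximal cliques containing a vertex span a subtree. On a chordless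
cycle `v v₁ v₂ … v` of length at least `4`, some forest edge `K K'` on the path between a clique
through `v v₁` and one through `v₁ v₂` is a bridge separating cliques containing `v` from those
containing `v₂`; every other vertex of the cycle lies in at most one of `K`, `K'`, so walking
from `v₂` back to `v` never crosses the bridge, a contradiction.

Chordal ⇒ clique forest: a chordal graph has a simplicial vertex `v` (Dirac). Inductively, a
forest on the maximal cliques of `G - v` in which the cliques containing any vertex span a subtree
turns into one for `G` by replacing `N(v)` by `N[v]` when `N(v)` is still a maximal clique, and
otherwise by attaching `N[v]` as a leaf to a maximal clique containing `N(v)`. Restricting to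
edges between intersecting cliques and using uniqueness of paths gives the conditions of the
theorem.
-/

namespace SimpleGraph

variable {V : Type*} {G : SimpleGraph V}

namespace Walk

lemma exists_length_lt_of_not_isChordless [DecidableEq V] {u v : V} (p : G.Walk u v)
    (hp : ¬p.IsChordless) : ∃ q : G.Walk u v, q.support ⊆ p.support ∧ q.length < p.length := by
  induction p with
  | nil =>
    refine absurd (isChordless_iff_forall_mem_edges.2 fun a b ha hb hab => ?_) hp
    simp only [support_nil, List.mem_singleton] at ha hb
    exact absurd (ha ▸ hb ▸ hab) (G.loopless.irrefl _)
  | @cons u u' w h p ih =>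
    obtain ⟨a, b, ha, hb, hab, hnot⟩ : ∃ a b, a ∈ (cons h p).support ∧ b ∈ (cons h p).support ∧
        G.Adj a b ∧ s(a, b) ∉ (cons h p).edges := by
      simpa [isChordless_iff_forall_mem_edges] using hp
    have hstart : ∀ b ∈ p.support, G.Adj u b → s(u, b) ∉ (cons h p).edges →
        ∃ q : G.Walk u w, q.support ⊆ (cons h p).support ∧ q.length < (cons h p).length := by
      intro b hb hub hnot
      have hbu' : b ≠ u' := by rintro rfl; simp at hnot
      exact ⟨cons hub (p.dropUntil b hb),
        List.cons_subset_cons _ (p.support_dropUntil_subset_support hb),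
        by simpa using p.length_dropUntil_lt_length hb hbu'⟩
    rw [support_cons, List.mem_cons] at ha hb
    by_cases hab' : a ∈ p.support ∧ b ∈ p.support
    · obtain ⟨q, hq, hlen⟩ := ih (by
        simp only [isChordless_iff_forall_mem_edges, not_forall]
        exact ⟨a, b, hab'.1, hab'.2, hab, fun h' => hnot (by simp [h'])⟩)
      exact ⟨cons h q, List.cons_subset_cons _ hq, by simpa using hlen⟩
    · rcases not_and_or.1 hab' with ha' | hb'
      · obtain rfl := ha.resolve_right ha'
        exact hstart b (hb.resolve_left fun hbu => hab.ne hbu.symm) hab hnot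
      · obtain rfl := hb.resolve_right hb'
        exact hstart a (ha.resolve_left hab.ne) hab.symm (by rwa [Sym2.eq_swap])

lemma exists_isPath_isChordless [DecidableEq V] {u v : V} (p : G.Walk u v) :
    ∃ q : G.Walk u v, q.IsPath ∧ q.IsChordless ∧ q.support ⊆ p.support := by
  induction hn : p.length using Nat.strong_induction_on generalizing p with
  | _ n ih =>
  by_cases hc : p.IsChordless
  · by_cases hpath : p.IsPath
    · exact ⟨p, hpath, hc, List.Subset.refl _⟩
    · have hlt : p.bypass.length < n := hn ▸ lt_of_not_ge fun h =>
        hpath (p.bypass_eq_self_of_length_le_length_bypass h ▸ p.bypass_isPath)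
      obtain ⟨q, hq, hqc, hsub⟩ := ih _ hlt p.bypass rfl
      exact ⟨q, hq, hqc, List.Subset.trans hsub p.support_bypass_subset_support⟩
  · obtain ⟨q, hsub, hlt⟩ := p.exists_length_lt_of_not_isChordless hc
    obtain ⟨q', hq', hq'c, hsub'⟩ := ih _ (hn ▸ hlt) q rfl
    exact ⟨q', hq', hq'c, List.Subset.trans hsub' hsub⟩

lemma IsCycle.exists_split_of_isChordless {v : V} {w : G.Walk v v} (hw : w.IsCycle)
    (hc : w.IsChordless) (hlen : 4 ≤ w.length) :
    ∃ (v₁ v₂ : V) (r : G.Walk v₂ v), G.Adj v v₁ ∧ G.Adj v₁ v₂ ∧ v₁ ∉ r.support ∧ v ≠ v₂ ∧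
      ¬G.Adj v v₂ ∧ ∀ x ∈ r.support, G.Adj v₁ x → x = v ∨ x = v₂ := by
  cases w with
  | nil => simp at hlen
  | @cons _ v₁ _ h01 q =>
  cases q with
  | nil => simp at hlen
  | @cons _ v₂ _ h12 r =>
  obtain ⟨hr, hv₁r⟩ := (cons_isPath_iff _ _).1 ((cons_isCycle_iff _ _).1 hw).1
  have hrlen : 2 ≤ r.length := by simp only [length_cons] at hlen; omega
  have hvr := r.end_mem_support
  have hv₂r := r.start_mem_support
  refine ⟨v₁, v₂, r, h01, h12, hv₁r, ?_, fun hadj => ?_, fun x hx hadj => ?_⟩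
  · rintro rfl
    simp [(isPath_iff_nil.1 hr).length_eq_zero] at hrlen
  · have := hc.mem_edges (by simp) (by simp) hadj
    simp only [edges_cons, List.mem_cons, Sym2.eq_iff] at this
    rcases this with (⟨-, rfl⟩ | ⟨rfl, -⟩) | (⟨rfl, -⟩ | ⟨-, rfl⟩) | h
    · exact hv₁r hv₂r
    · exact hv₁r hvr
    · exact hv₁r hvr
    · exact hv₁r hv₂r
    · simp [hr.length_eq_one_of_mem_edges (Sym2.eq_swap ▸ h)] at hrlen
  · have := hc.mem_edges (by simp) (by simp [hx]) hadj
    simp only [edges_cons, List.mem_cons, Sym2.eq_iff] at this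
    rcases this with (⟨rfl, -⟩ | ⟨-, rfl⟩) | (⟨-, rfl⟩ | ⟨rfl, -⟩) | h
    · exact absurd hvr hv₁r
    · exact Or.inl rfl
    · exact Or.inr rfl
    · exact absurd hv₂r hv₁r
    · exact absurd (r.fst_mem_support_of_mem_edges h) hv₁r

lemma IsPath.isCycle_cons_concat {a x y : V} {q : G.Walk x y} (hq : q.IsPath) (hxy : x ≠ y)
    (ha : a ∉ q.support) (hax : G.Adj a x) (hya : G.Adj y a) :
    (cons hax (q.concat hya)).IsCycle := by
  refine (cons_isCycle_iff _ _).2 ⟨hq.concat ha hya, fun h => ?_⟩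
  rw [edges_concat, List.concat_eq_append, List.mem_append, List.mem_singleton] at h
  rcases h with h | h
  · exact ha (q.fst_mem_support_of_mem_edges h)
  · rcases Sym2.eq_iff.1 h with ⟨rfl, -⟩ | ⟨-, rfl⟩
    · exact ha q.end_mem_support
    · exact hxy rfl

lemma IsPath.exists_adj_reachable_deleteEdges {α : Type*} {F : SimpleGraph α} (P : α → Prop)
    {c d : α} {p : F.Walk c d} (hp : p.IsPath) (hc : P c) (hd : ¬P d) :
    ∃ K ∈ p.support, ∃ K' ∈ p.support, F.Adj K K' ∧ P K ∧ ¬P K' ∧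
      (F.deleteEdges {s(K, K')}).Reachable K' d := by
  induction p with
  | nil => exact absurd hc hd
  | @cons c b d h q ih =>
    rw [cons_isPath_iff] at hp
    by_cases hb : P b
    · obtain ⟨K, hK, K', hK', hKK'⟩ := ih hp.1 hb hd
      exact ⟨K, List.mem_cons_of_mem _ hK, K', List.mem_cons_of_mem _ hK', hKK'⟩
    · exact ⟨c, List.mem_cons_self, b, List.mem_cons_of_mem _ q.start_mem_support, h, hc, hb,
        (q.toDeleteEdge _ fun he => hp.2 (q.fst_mem_support_of_mem_edges he)).reachable⟩

end Walk

lemma isMaxClique_iff_maximal {s : Set V} : IsMaxClique G s ↔ Maximal G.IsClique s :=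
  and_congr_right fun _ => forall₂_congr fun _ _ =>
    ⟨fun h hst => (h hst).le, fun h hst => (h hst).antisymm hst⟩

lemma exists_isMaxClique_superset [Finite V] {s : Set V} (hs : G.IsClique s) :
    ∃ C, IsMaxClique G C ∧ s ⊆ C := by
  obtain ⟨C, hsC, hC⟩ := Finite.exists_le_maximal hs
  exact ⟨C, isMaxClique_iff_maximal.2 hC, hsC⟩

lemma exists_isMaxClique_of_adj [Finite V] {a b : V} (h : G.Adj a b) :
    ∃ C, IsMaxClique G C ∧ a ∈ C ∧ b ∈ C := by
  obtain ⟨C, hC, habC⟩ := exists_isMaxClique_superset (isClique_pair.2 fun _ => h)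
  exact ⟨C, hC, habC (Set.mem_insert _ _), habC (Set.mem_insert_of_mem _ rfl)⟩

end SimpleGraph

section Chordal

variable {V : Type*} {G : SimpleGraph V}

lemma isChordal_iff_not_isChordless : IsChordal G ↔
    ∀ v (w : G.Walk v v), w.IsCycle → 4 ≤ w.length → ¬w.IsChordless := by
  simp only [IsChordal, Walk.isChordless_iff_forall_mem_edges, not_forall, exists_prop]

/-- The cycle `a, x, …, y, a` closed up from a chordless path by a common neighbour `a` of its
ends must have a chord, and it can only issue from `a`. -/
theorem IsChordal.exists_adj_of_isChordless (hG : IsChordal G) {a x y : V} {q : G.Walk x y}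
    (hq : q.IsPath) (hqc : q.IsChordless) (hxy : x ≠ y) (hnxy : ¬G.Adj x y)
    (ha : a ∉ q.support) (hax : G.Adj a x) (hay : G.Adj a y) :
    ∃ z ∈ q.support, z ≠ x ∧ z ≠ y ∧ G.Adj a z := by
  by_contra! hz
  have hlen : 2 ≤ q.length := by
    by_contra! h
    interval_cases hq1 : q.length
    · exact hxy (Walk.eq_of_length_eq_zero hq1)
    · exact hnxy (Walk.adj_of_length_eq_one hq1)
  set w := Walk.cons hax (q.concat hay.symm)
  refine isChordal_iff_not_isChordless.1 hG a w (hq.isCycle_cons_concat hxy ha hax hay.symm)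
    (by simpa [w]) (Walk.isChordless_iff_forall_mem_edges.2 ?_)
  have hapex : ∀ z ∈ q.support, G.Adj a z → s(a, z) ∈ w.edges := by
    intro z hzq haz
    rcases eq_or_ne z x with rfl | hzx
    · simp [w]
    · obtain rfl : z = y := by_contra fun hzy => hz z hzq hzx hzy haz
      simp [w, Walk.edges_concat, Sym2.eq_swap]
  have hmem : ∀ u ∈ w.support, u = a ∨ u ∈ q.support := by
    intro u hu
    simp only [w, Walk.support_cons, Walk.support_concat, List.mem_cons, List.mem_append] at hu
    tauto
  intro u u' hu hu' huu'
  rcases hmem u hu with rfl | huq <;> rcases hmem u' hu' with rfl | huq'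
  · exact absurd huu' (G.loopless.irrefl _)
  · exact hapex u' huq' huu'
  · rw [Sym2.eq_swap]; exact hapex u huq huu'.symm
  · simp [w, Walk.edges_concat, hqc.mem_edges huq huq' huu']

theorem IsChordal.adj_of_walk (hG : IsChordal G) {a x y : V} (hax : G.Adj a x)
    (hay : G.Adj a y) (hxy : x ≠ y) (p : G.Walk x y)
    (hp : ∀ z ∈ p.support, z ≠ x → z ≠ y → z ≠ a ∧ ¬G.Adj a z) : G.Adj x y := by
  classical
  by_contra hnxy
  obtain ⟨q, hq, hqc, hsub⟩ := p.exists_isPath_isChordless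
  have ha : a ∉ q.support := fun haq => by
    rcases eq_or_ne a x with rfl | hx
    · exact hax.ne rfl
    rcases eq_or_ne a y with rfl | hy
    · exact hay.ne rfl
    exact (hp a (hsub haq) hx hy).1 rfl
  obtain ⟨z, hz, hzx, hzy, haz⟩ := hG.exists_adj_of_isChordless hq hqc hxy hnxy ha hax hay
  exact (hp z (hsub hz) hzx hzy).2 haz

end Chordal

section CliqueForest

variable {V : Type*} {G : SimpleGraph V}

structure IsCliqueForest (G : SimpleGraph V) (F : SimpleGraph {s : Set V // IsMaxClique G s}) :
    Prop where
  le_cliqueGraph : F ≤ cliqueGraph G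
  isAcyclic : F.IsAcyclic
  reachable : ∀ c d, (cliqueGraph G).Reachable c d → F.Reachable c d
  inter_subset : ∀ c d (p : F.Walk c d), p.IsPath →
    ∀ e ∈ p.support, (c : Set V) ∩ (d : Set V) ⊆ (e : Set V)

namespace IsCliqueForest

variable {F : SimpleGraph {s : Set V // IsMaxClique G s}}

lemma reachable_of_mem (hF : IsCliqueForest G F) {x : V} {c d : {s // IsMaxClique G s}}
    (hc : x ∈ c.1) (hd : x ∈ d.1) : F.Reachable c d := by
  rcases eq_or_ne c d with rfl | hne
  · rfl
  · exact hF.reachable c d (Adj.reachable ((fromRel_adj ..).2 ⟨hne, Or.inl ⟨x, hc, hd⟩⟩))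

lemma reachable_deleteEdges (hF : IsCliqueForest G F) {x : V}
    {K K' L L' : {s // IsMaxClique G s}} (hx : ¬(x ∈ K.1 ∧ x ∈ K'.1)) (hL : x ∈ L.1)
    (hL' : x ∈ L'.1) : (F.deleteEdges {s(K, K')}).Reachable L L' := by
  classical
  obtain ⟨p⟩ := hF.reachable_of_mem hL hL'
  have hx' := hF.inter_subset L L' p.bypass p.bypass_isPath
  by_cases he : s(K, K') ∈ p.bypass.edges
  · exact absurd ⟨hx' K (p.bypass.fst_mem_support_of_mem_edges he) ⟨hL, hL'⟩,
      hx' K' (p.bypass.snd_mem_support_of_mem_edges he) ⟨hL, hL'⟩⟩ hx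
  · exact (p.bypass.toDeleteEdge _ he).reachable

lemma reachable_deleteEdges_of_walk [Finite V] (hF : IsCliqueForest G F)
    {K K' T : {s // IsMaxClique G s}} {a b : V} (r : G.Walk a b)
    (hr : ∀ x ∈ r.support, ¬(x ∈ K.1 ∧ x ∈ K'.1))
    (ha : ∀ L : {s // IsMaxClique G s}, a ∈ L.1 → (F.deleteEdges {s(K, K')}).Reachable L T) :
    ∀ L : {s // IsMaxClique G s}, b ∈ L.1 → (F.deleteEdges {s(K, K')}).Reachable L T := by
  induction r with
  | nil => exact ha
  | @cons a a' b h r ih =>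
    obtain ⟨C, hC, haC, ha'C⟩ := exists_isMaxClique_of_adj h
    refine ih (fun x hx => hr x (List.mem_cons_of_mem _ hx)) fun L hL => ?_
    exact (hF.reachable_deleteEdges (L' := ⟨C, hC⟩)
      (hr a' (List.mem_cons_of_mem _ r.start_mem_support)) hL ha'C).trans (ha ⟨C, hC⟩ haC)

theorem isChordal [Finite V] (hF : IsCliqueForest G F) : IsChordal G := by
  classical
  refine isChordal_iff_not_isChordless.2 fun v w hw hlen hc => ?_
  obtain ⟨v₁, v₂, r, h01, h12, hv₁r, hvv₂, hnadj, hnbr⟩ := hw.exists_split_of_isChordless hc hlen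
  obtain ⟨C₀, hC₀, hvC₀, hv₁C₀⟩ := exists_isMaxClique_of_adj h01
  obtain ⟨C₁, hC₁, hv₁C₁, hv₂C₁⟩ := exists_isMaxClique_of_adj h12
  obtain ⟨p⟩ := hF.reachable_of_mem (c := ⟨C₀, hC₀⟩) (d := ⟨C₁, hC₁⟩) hv₁C₀ hv₁C₁
  obtain ⟨K, hK, K', -, hKK', hvK, hvK', hK'C₁⟩ :=
    p.bypass_isPath.exists_adj_reachable_deleteEdges (fun L => v ∈ L.1) hvC₀
      fun h => hnadj (hC₁.1 h hv₂C₁ hvv₂)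
  have hv₁K := hF.inter_subset _ _ _ p.bypass_isPath K hK ⟨hv₁C₀, hv₁C₁⟩
  have hv₂K : v₂ ∉ K.1 := fun h => hnadj (K.2.1 hvK h hvv₂)
  have hsep : ∀ x ∈ r.support, ¬(x ∈ K.1 ∧ x ∈ K'.1) := by
    rintro x hx ⟨hxK, hxK'⟩
    rcases hnbr x hx (K.2.1 hv₁K hxK fun h => hv₁r (h ▸ hx)) with rfl | rfl
    exacts [hvK' hxK', hv₂K hxK]
  have hKK'reach := hF.reachable_deleteEdges_of_walk r hsep
    (fun L hL => (hF.reachable_deleteEdges (fun h => hv₂K h.1) hL hv₂C₁).trans hK'C₁.symm) K hvK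
  exact isBridge_iff.1 (isAcyclic_iff_forall_adj_isBridge.1 hF.isAcyclic hKK') hKK'reach

end IsCliqueForest

end CliqueForest

namespace SimpleGraph

variable {V : Type*} {G : SimpleGraph V}

def componentIn (G : SimpleGraph V) (W : Set V) (b : V) : Set V :=
  {z | ∃ p : G.Walk b z, ∀ y ∈ p.support, y ∈ W}

lemma componentIn_subset {W : Set V} {b : V} : G.componentIn W b ⊆ W :=
  fun z ⟨p, hp⟩ => hp z p.end_mem_support

lemma mem_componentIn_self {W : Set V} {b : V} (hb : b ∈ W) : b ∈ G.componentIn W b :=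
  ⟨.nil, by simpa⟩

lemma mem_componentIn_of_adj {W : Set V} {b z y : V} (hz : z ∈ G.componentIn W b)
    (hzy : G.Adj z y) (hy : y ∈ W) : y ∈ G.componentIn W b := by
  obtain ⟨p, hp⟩ := hz
  refine ⟨p.concat hzy, fun x hx => ?_⟩
  rw [Walk.support_concat, List.mem_append, List.mem_singleton] at hx
  exact hx.elim (hp x) (· ▸ hy)

lemma exists_walk_of_mem_componentIn {W : Set V} {b z z' : V} (hz : z ∈ G.componentIn W b)
    (hz' : z' ∈ G.componentIn W b) : ∃ p : G.Walk z z', ∀ y ∈ p.support, y ∈ W := by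
  obtain ⟨p, hp⟩ := hz
  obtain ⟨p', hp'⟩ := hz'
  refine ⟨p.reverse.append p', fun y hy => ?_⟩
  rw [Walk.mem_support_append_iff, Walk.support_reverse, List.mem_reverse] at hy
  exact hy.elim (hp y) (hp' y)

def IsSimplicialIn (G : SimpleGraph V) (U : Set V) (v : V) : Prop :=
  G.IsClique (G.neighborSet v ∩ U)

lemma exists_isSimplicialIn_of_neighborSet_subset {U X S : Set V} (hXS : X ∪ S ⊆ U)
    (hS : G.IsClique S) (hX : ∀ x ∈ X, G.neighborSet x ∩ U ⊆ X ∪ S) {x₀ : V} (hx₀ : x₀ ∈ X)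
    (h : G.IsClique (X ∪ S) ∨ ∃ s ∈ X ∪ S, ∃ t ∈ X ∪ S, s ≠ t ∧ ¬G.Adj s t ∧
      G.IsSimplicialIn (X ∪ S) s ∧ G.IsSimplicialIn (X ∪ S) t) :
    ∃ x ∈ X, G.IsSimplicialIn U x := by
  have key : ∀ x ∈ X, G.IsSimplicialIn U x ↔ G.IsSimplicialIn (X ∪ S) x := fun x hx => by
    rw [IsSimplicialIn, IsSimplicialIn, subset_antisymm (fun y hy => ⟨hy.1, hX x hx hy⟩)
      (Set.inter_subset_inter_right _ hXS)]
  rcases h with h | ⟨s, hs, t, ht, hst, hnst, hs', ht'⟩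
  · exact ⟨x₀, hx₀, (key x₀ hx₀).2 (h.subset Set.inter_subset_right)⟩
  · by_cases hsX : s ∈ X
    · exact ⟨s, hsX, (key s hsX).2 hs'⟩
    · have htX : t ∈ X := by_contra fun htX =>
        hnst (hS (hs.resolve_left hsX) (ht.resolve_left htX) hst)
      exact ⟨t, htX, (key t htX).2 ht'⟩

end SimpleGraph

theorem IsChordal.isClique_setOf_adj_componentIn {V : Type*} {G : SimpleGraph V}
    (hG : IsChordal G) {a b : V} {W : Set V} (hW : ∀ z ∈ W, z ≠ a ∧ ¬G.Adj a z) :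
    G.IsClique {s | G.Adj a s ∧ ∃ z ∈ G.componentIn W b, G.Adj s z} := by
  rintro x ⟨hax, zx, hzx, hxz⟩ y ⟨hay, zy, hzy, hyz⟩ hxy
  obtain ⟨p, hp⟩ := exists_walk_of_mem_componentIn hzx hzy
  refine hG.adj_of_walk hax hay hxy (.cons hxz (p.concat hyz.symm))
    fun z hz hzx' hzy' => hW z (hp z ?_)
  simp only [Walk.support_cons, Walk.support_concat, List.mem_cons, List.mem_append] at hz
  tauto

open Set in
/-- Dirac's lemma. For non-adjacent `a, b ∈ U`, the neighbours `S` of `a` that see the component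
`D` of `b` in `U ∖ N[a]` form a clique separating `D` from `A = U ∖ (D ∪ S) ∋ a`; a simplicial
vertex of `G[D ∪ S]` resp. `G[A ∪ S]` outside the clique `S` is simplicial in `G[U]`. -/
theorem IsChordal.isClique_or_exists_isSimplicialIn {V : Type*} {G : SimpleGraph V} [Finite V]
    (hG : IsChordal G) (U : Set V) :
    G.IsClique U ∨ ∃ s ∈ U, ∃ t ∈ U, s ≠ t ∧ ¬G.Adj s t ∧
      G.IsSimplicialIn U s ∧ G.IsSimplicialIn U t := by
  induction U using WellFoundedLT.induction with
  | _ U ih =>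
  refine or_iff_not_imp_left.2 fun hU => ?_
  obtain ⟨a, ha, b, hb, hab, hnab⟩ : ∃ a ∈ U, ∃ b ∈ U, a ≠ b ∧ ¬G.Adj a b := by
    simpa [IsClique, Set.Pairwise] using hU
  set W := U \ insert a (G.neighborSet a)
  set D := G.componentIn W b
  set S := {s ∈ U | G.Adj a s ∧ ∃ z ∈ D, G.Adj s z}
  set A := U \ (D ∪ S)
  have hDW : D ⊆ W := componentIn_subset
  have hbD : b ∈ D := mem_componentIn_self ⟨hb, by simp [hab.symm, hnab]⟩
  have hS : G.IsClique S := (hG.isClique_setOf_adj_componentIn (b := b)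
    fun z hz => by simpa [not_or] using hz.2).subset fun _ hs => hs.2
  have hD : ∀ z ∈ D, G.neighborSet z ∩ U ⊆ D ∪ S := by
    rintro z hz y ⟨hzy, hy⟩
    by_cases hyW : y ∈ W
    · exact Or.inl (mem_componentIn_of_adj hz hzy hyW)
    · have hza : ¬G.Adj a z := fun h => (hDW hz).2 (Or.inr h)
      obtain rfl | hay : y = a ∨ G.Adj a y := or_iff_not_imp_left.2 (by simpa [W, hy] using hyW)
      · exact absurd hzy.symm hza
      · exact Or.inr ⟨hy, hay, z, hz, hzy.symm⟩
  have hA : ∀ x ∈ A, G.neighborSet x ∩ U ⊆ A ∪ S := by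
    rintro x ⟨hxU, hx⟩ y ⟨hxy, hy⟩
    by_cases hyD : y ∈ D
    · exact absurd (hD y hyD ⟨hxy.symm, hxU⟩) hx
    · by_cases hyS : y ∈ S
      exacts [Or.inr hyS, Or.inl ⟨hy, fun h => h.elim hyD hyS⟩]
  have hDSU : D ∪ S ⊆ U := union_subset (hDW.trans sdiff_subset) (sep_subset _ _)
  have haA : a ∈ A := ⟨ha, fun h => h.elim (fun h => (hDW h).2 (mem_insert _ _))
    fun h => G.loopless.irrefl _ h.2.1⟩
  obtain ⟨s, hsD, hs⟩ := exists_isSimplicialIn_of_neighborSet_subset hDSU hS hD hbD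
    (ih _ ((ssubset_iff_of_subset hDSU).2 ⟨a, ha, haA.2⟩))
  have hASU : A ∪ S ⊆ U := union_subset sdiff_subset (sep_subset _ _)
  obtain ⟨t, htA, ht⟩ := exists_isSimplicialIn_of_neighborSet_subset hASU hS hA haA
    (ih _ ((ssubset_iff_of_subset hASU).2
      ⟨b, hb, fun h => h.elim (fun h => h.2 (Or.inl hbD)) fun h => hnab h.2.1⟩))
  refine ⟨s, (hDW hsD).1, t, htA.1, ?_,
    fun h => htA.2 (hD s hsD (show t ∈ _ ∩ U from ⟨h, htA.1⟩)), hs, ht⟩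
  rintro rfl
  exact htA.2 (Or.inl hsD)

theorem IsChordal.exists_isSimplicialIn {V : Type*} {G : SimpleGraph V} [Finite V]
    (hG : IsChordal G) {U : Set V} (hU : U.Nonempty) : ∃ v ∈ U, G.IsSimplicialIn U v := by
  rcases hG.isClique_or_exists_isSimplicialIn U with h | ⟨s, hs, -, -, -, -, hsimp, -⟩
  · obtain ⟨v, hv⟩ := hU
    exact ⟨v, hv, h.subset Set.inter_subset_right⟩
  · exact ⟨s, hs, hsimp⟩

namespace SimpleGraph

variable {V : Type*} {G : SimpleGraph V}

/-- The maximal cliques of the induced subgraph `G[U]`, as sets of vertices of `G`. -/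
def maxCliquesIn (G : SimpleGraph V) (U : Set V) : Set (Set V) :=
  {s | Maximal (fun t => t ⊆ U ∧ G.IsClique t) s}

lemma maxCliquesIn_univ : G.maxCliquesIn Set.univ = {s | IsMaxClique G s} := by
  simp [maxCliquesIn, isMaxClique_iff_maximal]

lemma subset_insert_neighborSet_of_isClique {U t : Set V} {v : V} (ht : G.IsClique t)
    (htU : t ⊆ U) (hv : v ∈ t) : t ⊆ insert v (G.neighborSet v ∩ U) :=
  fun u hu => (eq_or_ne u v).imp id fun huv => ⟨ht hv hu huv.symm, htU hu⟩

lemma IsSimplicialIn.insert_mem_maxCliquesIn {U : Set V} {v : V} (hs : G.IsSimplicialIn U v)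
    (hv : v ∈ U) : insert v (G.neighborSet v ∩ U) ∈ G.maxCliquesIn U :=
  ⟨⟨Set.insert_subset hv Set.inter_subset_right, hs.insert fun _ hb _ => hb.1⟩,
    fun _ ht hle => subset_insert_neighborSet_of_isClique ht.2 ht.1 (hle (Set.mem_insert v _))⟩

theorem IsSimplicialIn.maxCliquesIn_eq {U : Set V} {v : V} (hs : G.IsSimplicialIn U v)
    (hv : v ∈ U) : G.maxCliquesIn U = insert (insert v (G.neighborSet v ∩ U))
      (G.maxCliquesIn (U \ {v}) \ {G.neighborSet v ∩ U}) := by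
  set N := G.neighborSet v ∩ U
  have hB : Maximal (fun t => t ⊆ U ∧ G.IsClique t) (insert v N) := hs.insert_mem_maxCliquesIn hv
  have hNU : N ⊆ U \ {v} := fun u hu => ⟨hu.2, fun h => G.loopless.irrefl v (h ▸ hu.1)⟩
  have hsub : ∀ {C : Set V}, C ⊆ U → v ∉ C → C ⊆ U \ {v} := fun hCU hvC u hu =>
    ⟨hCU hu, fun h => hvC (h ▸ hu)⟩
  ext C
  constructor
  · intro (hC : Maximal (fun t => t ⊆ U ∧ G.IsClique t) C)
    by_cases hvC : v ∈ C
    · exact Or.inl (hC.eq_of_subset hB.prop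
        (subset_insert_neighborSet_of_isClique hC.prop.2 hC.prop.1 hvC))
    · refine Or.inr ⟨⟨⟨hsub hC.prop.1 hvC, hC.prop.2⟩,
        fun t ht hCt => hC.2 ⟨ht.1.trans Set.sdiff_subset, ht.2⟩ hCt⟩, fun hCN => ?_⟩
      exact hvC (hC.eq_of_subset hB.prop (hCN ▸ Set.subset_insert v N) ▸ Set.mem_insert v N)
  · rintro (rfl | ⟨hC : Maximal (fun t => t ⊆ U \ {v} ∧ G.IsClique t) C, hCN⟩)
    · exact hB
    refine ⟨⟨hC.prop.1.trans Set.sdiff_subset, hC.prop.2⟩, fun t ht hCt => ?_⟩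
    by_cases hvt : v ∈ t
    · refine absurd (hC.eq_of_subset ⟨hNU, hs⟩ fun u hu => ?_) hCN
      exact (subset_insert_neighborSet_of_isClique ht.2 ht.1 hvt (hCt hu)).resolve_left
        (hC.prop.1 hu).2
    · exact hC.2 ⟨hsub ht.1 hvt, ht.2⟩ hCt

end SimpleGraph

namespace SimpleGraph

variable {V : Type*}

/-- The forest lives on all of `Set V`, only members of `𝒞` carrying edges, so that its vertex type
does not change with `𝒞`. -/
structure IsJunctionForest (𝒞 : Set (Set V)) (F : SimpleGraph (Set V)) : Prop where
  isAcyclic : F.IsAcyclic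
  mem_of_adj : ∀ ⦃c d⦄, F.Adj c d → c ∈ 𝒞
  exists_walk : ∀ ⦃x c d⦄, c ∈ 𝒞 → d ∈ 𝒞 → x ∈ c → x ∈ d →
    ∃ p : F.Walk c d, ∀ e ∈ p.support, x ∈ e

namespace IsJunctionForest

variable {𝒞 : Set (Set V)} {F : SimpleGraph (Set V)}

lemma mem_of_mem_support (hF : IsJunctionForest 𝒞 F) :
    ∀ {c d : Set V} (p : F.Walk c d), c ∈ 𝒞 → ∀ e ∈ p.support, e ∈ 𝒞
  | _, _, .nil, hc, _, he => List.mem_singleton.1 he ▸ hc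
  | _, _, .cons h p, hc, e, he =>
    (List.mem_cons.1 he).elim (· ▸ hc) (hF.mem_of_mem_support p (hF.mem_of_adj h.symm) e)

theorem sup_edge (hF : IsJunctionForest 𝒞 F) {B D : Set V} (hD : D ∈ 𝒞) (hB : B ∉ 𝒞)
    (hBD : ∀ X ∈ 𝒞, B ∩ X ⊆ D) : IsJunctionForest (insert B 𝒞) (F ⊔ edge B D) := by
  have hne : B ≠ D := fun h => hB (h ▸ hD)
  have hleaf : ∀ {x d}, d ∈ 𝒞 → x ∈ B → x ∈ d →
      ∃ p : (F ⊔ edge B D).Walk B d, ∀ e ∈ p.support, x ∈ e := by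
    intro x d hd hxB hxd
    obtain ⟨p, hp⟩ := hF.exists_walk hD hd (hBD d hd ⟨hxB, hxd⟩) hxd
    refine ⟨.cons (Or.inr ((edge_adj ..).2 ⟨Or.inl ⟨rfl, rfl⟩, hne⟩)) (p.mapLe le_sup_left), ?_⟩
    simpa [Walk.support_mapLe_eq_support, hxB] using hp
  refine ⟨hF.isAcyclic.sup_edge_of_not_reachable ?_, ?_, ?_⟩
  · rintro ⟨p⟩
    cases p with
    | nil => exact hne rfl
    | cons h _ => exact hB (hF.mem_of_adj h)
  · rintro c d (h | h)
    · exact Or.inr (hF.mem_of_adj h)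
    · rcases ((edge_adj ..).1 h).1 with ⟨rfl, -⟩ | ⟨rfl, -⟩
      exacts [Or.inl rfl, Or.inr hD]
  · rintro x c d (rfl | hc) (rfl | hd) hxc hxd
    · exact ⟨.nil, by simpa using hxc⟩
    · exact hleaf hd hxc hxd
    · obtain ⟨p, hp⟩ := hleaf hc hxd hxc
      exact ⟨p.reverse, by simpa using hp⟩
    · obtain ⟨p, hp⟩ := hF.exists_walk hc hd hxc hxd
      exact ⟨p.mapLe le_sup_left, by simpa [Walk.support_mapLe_eq_support] using hp⟩

theorem comap_equiv (hF : IsJunctionForest 𝒞 F) {𝒞' : Set (Set V)} (σ : Set V ≃ Set V)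
    (h𝒞 : ∀ c, c ∈ 𝒞' ↔ σ c ∈ 𝒞) (hσ : ∀ c ∈ 𝒞', ∀ x ∈ σ c, x ∈ c)
    (hx : ∀ ⦃x c d⦄, c ∈ 𝒞' → d ∈ 𝒞' → x ∈ c → x ∈ d → x ∈ σ c ∧ x ∈ σ d ∨ c = d) :
    IsJunctionForest 𝒞' (F.comap σ) := by
  let φ : F →g F.comap σ := ⟨σ.symm, fun h => by rwa [comap_adj, σ.apply_symm_apply,
    σ.apply_symm_apply]⟩
  refine ⟨hF.isAcyclic.of_comap σ.toEmbedding, fun c d h => (h𝒞 c).2 (hF.mem_of_adj h),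
    fun x c d hc hd hxc hxd => ?_⟩
  rcases hx hc hd hxc hxd with hx | rfl
  · obtain ⟨p, hp⟩ := hF.exists_walk ((h𝒞 c).1 hc) ((h𝒞 d).1 hd) hx.1 hx.2
    refine ⟨(p.map φ).copy (σ.symm_apply_apply c) (σ.symm_apply_apply d), fun e he => ?_⟩
    rw [Walk.support_copy, Walk.support_map, List.mem_map] at he
    obtain ⟨e, he, rfl⟩ := he
    refine hσ (σ.symm e) ((h𝒞 _).2 ?_) x ?_ <;> rw [σ.apply_symm_apply]
    exacts [hF.mem_of_mem_support p ((h𝒞 c).1 hc) e he, hp e he]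
  · exact ⟨.nil, by simpa using hxc⟩

theorem exists_replace (hF : IsJunctionForest 𝒞 F) {B N : Set V} (hN : N ∈ 𝒞) (hB : B ∉ 𝒞)
    (hNB : N ⊆ B) (hBN : ∀ X ∈ 𝒞, B ∩ X ⊆ N) :
    ∃ F', IsJunctionForest (insert B (𝒞 \ {N})) F' := by
  classical
  have hσ : ∀ c ∈ 𝒞, c ≠ N → Equiv.swap N B c = c := fun c hc hcN =>
    Equiv.swap_apply_of_ne_of_ne hcN fun h => hB (h ▸ hc)
  refine ⟨_, hF.comap_equiv (Equiv.swap N B) (fun c => ?_) ?_ ?_⟩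
  · rcases eq_or_ne c B with rfl | hcB
    · simp [hN]
    rcases eq_or_ne c N with rfl | hcN
    · simp [hB, hcB]
    · simp [Equiv.swap_apply_of_ne_of_ne hcN hcB, hcB, hcN]
  · rintro c (rfl | ⟨hc, hcN⟩) x hx
    · exact hNB (by rwa [Equiv.swap_apply_right] at hx)
    · rwa [hσ c hc hcN] at hx
  · rintro x c d (rfl | ⟨hc, hcN⟩) (rfl | ⟨hd, hdN⟩) hxc hxd
    · exact Or.inr rfl
    · rw [Equiv.swap_apply_right, hσ d hd hdN]
      exact Or.inl ⟨hBN d hd ⟨hxc, hxd⟩, hxd⟩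
    · rw [Equiv.swap_apply_right, hσ c hc hcN]
      exact Or.inl ⟨hxc, hBN c hc ⟨hxd, hxc⟩⟩
    · rw [hσ c hc hcN, hσ d hd hdN]
      exact Or.inl ⟨hxc, hxd⟩

end IsJunctionForest

end SimpleGraph

namespace SimpleGraph.IsJunctionForest

variable {V : Type*} {G : SimpleGraph V} {F : SimpleGraph (Set V)}

lemma exists_walk_comap_inf_cliqueGraph (hF : IsJunctionForest {s | IsMaxClique G s} F) {x : V} :
    ∀ {a b : Set V} (q : F.Walk a b) (ha : IsMaxClique G a) (hb : IsMaxClique G b),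
      (∀ e ∈ q.support, x ∈ e) → ∃ p : (F.comap Subtype.val ⊓ cliqueGraph G).Walk ⟨a, ha⟩ ⟨b, hb⟩,
        ∀ e ∈ p.support, x ∈ (e : Set V)
  | _, _, .nil, _, _, hq => ⟨.nil, by simpa using hq⟩
  | _, _, .cons h q, ha, hb, hq => by
    have hx := hq _ (List.mem_cons_self ..)
    have hx' := hq _ (List.mem_cons_of_mem _ q.start_mem_support)
    have ha' : IsMaxClique G _ := hF.mem_of_adj h.symm
    obtain ⟨p, hp⟩ := hF.exists_walk_comap_inf_cliqueGraph q ha' hb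
      fun e he => hq e (List.mem_cons_of_mem _ he)
    have hadj : (F.comap Subtype.val ⊓ cliqueGraph G).Adj ⟨_, ha⟩ ⟨_, ha'⟩ :=
      ⟨h, (fromRel_adj ..).2 ⟨fun he => h.ne (congrArg Subtype.val he), Or.inl ⟨x, hx, hx'⟩⟩⟩
    refine ⟨.cons hadj p, ?_⟩
    simpa [hx] using hp

/-- Paths in a forest are unique, so a path from `c` to `d` is the one inside the subtree of any
point of `c ∩ d`. -/
theorem isCliqueForest (hF : IsJunctionForest {s | IsMaxClique G s} F) :
    IsCliqueForest G (F.comap Subtype.val ⊓ cliqueGraph G) := by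
  classical
  have hwalk : ∀ {x : V} {c d : {s // IsMaxClique G s}}, x ∈ c.1 → x ∈ d.1 →
      ∃ p : (F.comap Subtype.val ⊓ cliqueGraph G).Walk c d, ∀ e ∈ p.support, x ∈ e.1 :=
    fun {_ c d} hc hd => let ⟨q, hq⟩ := hF.exists_walk c.2 d.2 hc hd
      hF.exists_walk_comap_inf_cliqueGraph q c.2 d.2 hq
  have hacyc : (F.comap Subtype.val ⊓ cliqueGraph G).IsAcyclic :=
    (hF.isAcyclic.of_comap (Function.Embedding.subtype _)).anti inf_le_left
  refine ⟨inf_le_right, hacyc, fun c d h => ?_, fun c d p hp e he x hx => ?_⟩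
  · obtain ⟨q⟩ := h
    induction q with
    | nil => rfl
    | cons h _ ih =>
      obtain ⟨x, hx⟩ := ((fromRel_adj ..).1 h).2.elim id fun h => Set.inter_comm .. ▸ h
      obtain ⟨p, -⟩ := hwalk hx.1 hx.2
      exact p.reachable.trans ih
  · obtain ⟨q, hq⟩ := hwalk hx.1 hx.2
    obtain rfl : p = q.bypass := congrArg Subtype.val
      ((hacyc.subsingleton_path c d).elim ⟨p, hp⟩ ⟨q.bypass, q.bypass_isPath⟩)
    exact hq e (q.support_bypass_subset_support he)

end SimpleGraph.IsJunctionForest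

theorem IsChordal.exists_isJunctionForest_maxCliquesIn {V : Type*} {G : SimpleGraph V} [Finite V]
    (hG : IsChordal G) (U : Set V) : ∃ F, IsJunctionForest (G.maxCliquesIn U) F := by
  induction U using WellFoundedLT.induction with
  | _ U ih =>
  rcases U.eq_empty_or_nonempty with rfl | hU
  · exact ⟨⊥, isAcyclic_bot, fun _ _ h => h.elim, fun _ _ _ hc _ hx _ => (hc.1.1 hx).elim⟩
  obtain ⟨v, hv, hsimp⟩ := hG.exists_isSimplicialIn hU
  obtain ⟨F, hF⟩ := ih (U \ {v}) (Set.sdiff_singleton_ssubset.2 hv)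
  set N := G.neighborSet v ∩ U
  have hB : insert v N ∉ G.maxCliquesIn (U \ {v}) := fun h => (h.1.1 (Set.mem_insert v N)).2 rfl
  have hBN : ∀ X ∈ G.maxCliquesIn (U \ {v}), insert v N ∩ X ⊆ N := fun X hX x hx =>
    hx.1.resolve_left fun h => (hX.1.1 (h ▸ hx.2)).2 rfl
  rw [hsimp.maxCliquesIn_eq hv]
  by_cases hN : N ∈ G.maxCliquesIn (U \ {v})
  · exact hF.exists_replace hN hB (Set.subset_insert v N) hBN
  · obtain ⟨D, hND, hD⟩ := Finite.exists_le_maximal (p := fun t => t ⊆ U \ {v} ∧ G.IsClique t)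
      (a := N) ⟨fun u hu => ⟨hu.2, fun h => G.loopless.irrefl v (h ▸ hu.1)⟩, hsimp⟩
    rw [Set.sdiff_singleton_eq_self hN]
    exact ⟨_, hF.sup_edge hD hB fun X hX => (hBN X hX).trans hND⟩

/-- A graph `G` has a clique forest (a spanning forest of its clique graph
satisfying the clique-intersection property) if and only if `G` is chordal. -/
theorem clique_forest_iff_chordal {V : Type*} [Fintype V] (G : SimpleGraph V) :
    (∃ F : SimpleGraph {s : Set V // IsMaxClique G s},
      F ≤ cliqueGraph G ∧ F.IsAcyclic ∧
      (∀ c d, (cliqueGraph G).Reachable c d → F.Reachable c d) ∧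
      (∀ c d (p : F.Walk c d), p.IsPath →
        ∀ e ∈ p.support, (c : Set V) ∩ (d : Set V) ⊆ (e : Set V)))
    ↔ IsChordal G := by
  refine ⟨fun ⟨F, h₁, h₂, h₃, h₄⟩ => IsCliqueForest.isChordal ⟨h₁, h₂, h₃, h₄⟩, fun hG => ?_⟩
  obtain ⟨F, hF⟩ := hG.exists_isJunctionForest_maxCliquesIn Set.univ
  rw [maxCliquesIn_univ] at hF
  obtain ⟨h₁, h₂, h₃, h₄⟩ := hF.isCliqueForest
  exact ⟨_, h₁, h₂, h₃, h₄⟩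
end

section
/- If a graph is built by starting from a single complete clique and repeatedly applying the clique expansion operator (attaching each new isolated vertex to a complete subset of an existing clique), then the resulting sequence of cliques, in order of creation, is a perfect sequence, i.e., it satisfies the running intersection property. -/
open SimpleGraph

/-- If a graph is built by starting from a single complete clique and repeatedly
applying the clique expansion operator (attaching each new isolated vertex to a
subset of an existing clique), then the resulting sequence of cliques, in order
of creation, satisfies the running intersection property with complete
separators, i.e. it is a perfect sequence. -/
theorem clique_expansion_perfect_sequence {V : Type*} (G : SimpleGraph V)
    (m : ℕ) (C : Fin m → Set V)
    (hclique : ∀ i, G.IsClique (C i))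
    (hexp : ∀ i : Fin m, 0 < (i : ℕ) →
      ∃ j, j < i ∧ ∃ (S : Set V) (v : V),
        S ⊆ C j ∧ v ∉ (⋃ k < i, C k) ∧ C i = S ∪ {v}) :
    ∀ i : Fin m, 0 < (i : ℕ) →
      ∃ j, j < i ∧ (C i ∩ ⋃ k < i, C k) ⊆ C j ∧
        G.IsClique (C i ∩ ⋃ k < i, C k) := by
  intro i hi
  obtain ⟨j, hji, S, v, hSj, hv, hCi⟩ := hexp i hi
  refine ⟨j, hji, ?_, (hclique i).subset Set.inter_subset_left⟩
  rw [hCi, Set.union_singleton, Set.insert_inter_of_notMem hv]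
  exact Set.inter_subset_left.trans hSj
end

section
/- If the cliques of a connected graph G admit an ordering with the running intersection property, then G is chordal. -/
open SimpleGraph

/-!
Suppose some cycle of length at least four has no chord. Every edge of the cycle lies in a
maximal clique; take an edge whose first containing clique `C i` has the largest possible index.
By the running intersection property one endpoint `a` of this edge lies in no earlier clique, so
the other cycle edge at `a` also first appears in `C i`. Hence both cycle neighbours of `a` lie
in the clique `C i` and are adjacent, which is a chord.
-/

namespace SimpleGraph.Walk

variable {V : Type*} {G : SimpleGraph V} {u v a b c : V}

lemma support_subset_of_forall_mem_edges {S : Set V} (p : G.Walk u v)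
    (hS : ∀ x ∈ S, ∀ y, s(x, y) ∈ p.edges → y ∈ S) {x : V} (hx : x ∈ p.support)
    (hxS : x ∈ S) : ∀ y ∈ p.support, y ∈ S := by
  induction p generalizing x with
  | nil => simp_all
  | @cons u v' _ h q ih =>
    have hS' : ∀ x ∈ S, ∀ y, s(x, y) ∈ q.edges → y ∈ S := fun x hx y hxy =>
      hS x hx y (by simp [hxy])
    have hq : ∀ y ∈ q.support, y ∈ S := by
      rw [support_cons, List.mem_cons] at hx
      rcases hx with rfl | hx
      · exact ih hS' q.start_mem_support (hS _ hxS _ (by simp))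
      · exact ih hS' hx hxS
    have hu : u ∈ S := hS _ (hq _ q.start_mem_support) _ (by simp [Sym2.eq_swap])
    simpa [hu] using hq

namespace IsCycle

variable {w : G.Walk v v}

lemma exists_ne_mem_edges (hw : w.IsCycle) (h : s(a, b) ∈ w.edges) :
    ∃ c, c ≠ b ∧ s(a, c) ∈ w.edges := by
  have htwo := hw.ncard_neighborSet_toSubgraph_eq_two (w.fst_mem_support_of_mem_edges h)
  obtain ⟨c, hc, hcb⟩ :=
    Set.exists_ne_of_one_lt_ncard (s := w.toSubgraph.neighborSet a) (by omega) b
  exact ⟨c, hcb, adj_toSubgraph_iff_mem_edges.mp hc⟩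

lemma neighborSet_toSubgraph_eq (hw : w.IsCycle) (hb : s(a, b) ∈ w.edges)
    (hc : s(a, c) ∈ w.edges) (hbc : b ≠ c) : w.toSubgraph.neighborSet a = {b, c} := by
  have htwo := hw.ncard_neighborSet_toSubgraph_eq_two (w.fst_mem_support_of_mem_edges hb)
  refine (Set.eq_of_subset_of_ncard_le ?_ ?_ (Set.finite_of_ncard_ne_zero (by omega))).symm
  · simp [Set.insert_subset_iff, Subgraph.mem_neighborSet, adj_toSubgraph_iff_mem_edges, hb, hc]
  · rw [htwo, Set.ncard_pair hbc]

lemma length_eq_three_of_mem_edges (hw : w.IsCycle) (hab : s(a, b) ∈ w.edges)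
    (hbc : s(b, c) ∈ w.edges) (hca : s(c, a) ∈ w.edges) : w.length = 3 := by
  classical
  have hne {x y : V} (h : s(x, y) ∈ w.edges) : x ≠ y := (w.adj_of_mem_edges h).ne
  have hclosed : ∀ x ∈ ({a, b, c} : Set V), ∀ y, s(x, y) ∈ w.edges → y ∈ ({a, b, c} : Set V) := by
    intro x hx y hxy
    have hy : y ∈ w.toSubgraph.neighborSet x := adj_toSubgraph_iff_mem_edges.mpr hxy
    rcases hx with rfl | rfl | rfl
    · rw [hw.neighborSet_toSubgraph_eq hab (Sym2.eq_swap ▸ hca) (hne hbc)] at hy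
      grind
    · rw [hw.neighborSet_toSubgraph_eq hbc (Sym2.eq_swap ▸ hab) (hne hca)] at hy
      grind
    · rw [hw.neighborSet_toSubgraph_eq hca (Sym2.eq_swap ▸ hbc) (hne hab)] at hy
      grind
  have hsupp := w.support_subset_of_forall_mem_edges hclosed
    (w.fst_mem_support_of_mem_edges hab) (by simp)
  have hsub : w.support.tail.toFinset ⊆ {a, b, c} := fun x hx => by
    simpa using hsupp x (List.mem_of_mem_tail (List.mem_toFinset.mp hx))
  have hcard := Finset.card_le_card hsub
  rw [List.toFinset_card_of_nodup hw.support_nodup, List.length_tail, length_support] at hcard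
  have := Finset.card_le_three (a := a) (b := b) (c := c)
  have := hw.three_le_length
  omega

lemma not_adj_of_isChordless (hw : w.IsCycle) (hch : w.IsChordless) (hlen : 4 ≤ w.length)
    (hb : s(a, b) ∈ w.edges) (hc : s(a, c) ∈ w.edges) : ¬G.Adj b c := by
  intro hadj
  have hcb := hch.mem_edges (w.snd_mem_support_of_mem_edges hc)
    (w.snd_mem_support_of_mem_edges hb) hadj.symm
  have := hw.length_eq_three_of_mem_edges (Sym2.eq_swap ▸ hb) hc hcb
  omega

end IsCycle
end SimpleGraph.Walk

lemma isChordal_iff {V : Type*} {G : SimpleGraph V} :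
    IsChordal G ↔ ∀ (v : V) (w : G.Walk v v), w.IsCycle → 4 ≤ w.length → ¬w.IsChordless := by
  simp only [IsChordal, Walk.isChordless_iff_forall_mem_edges]
  grind

lemma exists_isMaxClique_superset {V : Type*} {G : SimpleGraph V} {s : Set V}
    (hs : G.IsClique s) : ∃ t, s ⊆ t ∧ IsMaxClique G t := by
  obtain ⟨t, hst, ht⟩ := zorn_subset_nonempty {t | G.IsClique t}
    (fun c hc hchain _ => ⟨⋃₀ c, (isClique_sUnion hchain.directedOn).mpr hc,
      fun _ => Set.subset_sUnion_of_mem⟩) s hs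
  exact ⟨t, hst, ht.prop, fun u hu htu => (ht.eq_of_subset hu htu).symm⟩

def HasRunningIntersection {α : Type*} {m : ℕ} (C : Fin m → Set α) : Prop :=
  ∀ i : Fin m, 0 < (i : ℕ) → ∃ j, j < i ∧ (C i ∩ ⋃ k < i, C k) ⊆ C j

namespace HasRunningIntersection

variable {α : Type*} {m : ℕ} {C : Fin m → Set α}

lemma exists_forall_lt_notMem (hC : HasRunningIntersection C) {s : Set α} (hs : s.Nonempty)
    {i : Fin m} (hi : Minimal (fun k => s ⊆ C k) i) : ∃ x ∈ s, ∀ k < i, x ∉ C k := by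
  by_contra! hold
  obtain ⟨x, hx⟩ := hs
  obtain ⟨k, hki, -⟩ := hold x hx
  obtain ⟨j, hji, hj⟩ := hC i (lt_of_le_of_lt (Nat.zero_le _) hki)
  refine hi.not_lt (fun y hy => hj ⟨hi.prop hy, ?_⟩) hji
  obtain ⟨k, hki, hyk⟩ := hold y hy
  exact Set.mem_biUnion hki hyk

lemma exists_star_subset (hC : HasRunningIntersection C) {E : Set (Sym2 α)}
    (hE : E.Nonempty) (hcov : ∀ e ∈ E, ∃ i, (e : Set α) ⊆ C i) :
    ∃ a b i, s(a, b) ∈ E ∧ {c | s(a, c) ∈ E} ⊆ C i := by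
  have hfirst (e : Sym2 α) (he : e ∈ E) : ∃ i, Minimal (fun k => (e : Set α) ⊆ C k) i :=
    exists_minimal_of_wellFoundedLT _ (hcov e he)
  obtain ⟨i, ⟨e, he, hei⟩, hlast⟩ :=
    Set.exists_max_image {i | ∃ e ∈ E, Minimal (fun k => (e : Set α) ⊆ C k) i} id
      (Set.toFinite _) (hE.elim fun e he => (hfirst e he).elim fun i hi => ⟨i, e, he, hi⟩)
  obtain ⟨a, ha, hnew⟩ := hC.exists_forall_lt_notMem ⟨_, e.out_fst_mem⟩ hei
  obtain ⟨b, rfl⟩ := Sym2.mem_iff_exists.mp ha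
  refine ⟨a, b, i, he, fun c hc => ?_⟩
  obtain ⟨i', hi'⟩ := hfirst _ hc
  have : i' = i := le_antisymm (hlast i' ⟨_, hc, hi'⟩)
    (not_lt.mp fun h => hnew i' h (hi'.prop (by simp)))
  exact this ▸ hi'.prop (by simp)

end HasRunningIntersection

theorem rip_implies_chordal_general {V : Type*} (G : SimpleGraph V)
    (m : ℕ) (C : Fin m → Set V)
    (hmax : ∀ i, IsMaxClique G (C i))
    (hall : ∀ s : Set V, IsMaxClique G s → ∃ i, C i = s)
    (hrip : ∀ i : Fin m, 0 < (i : ℕ) →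
      ∃ j, j < i ∧ (C i ∩ ⋃ k < i, C k) ⊆ C j) :
    IsChordal G := by
  rw [isChordal_iff]
  intro v w hw hlen hch
  have hcov : ∀ e ∈ {e | e ∈ w.edges}, ∃ i, (e : Set V) ⊆ C i := by
    intro e he
    induction e using Sym2.ind with | h x y =>
    obtain ⟨t, hxy, ht⟩ :=
      exists_isMaxClique_superset (isClique_pair.mpr fun _ => w.adj_of_mem_edges he)
    obtain ⟨i, rfl⟩ := hall t ht
    exact ⟨i, by simpa using hxy⟩
  have hE : {e | e ∈ w.edges}.Nonempty :=
    List.exists_mem_of_length_pos (by rw [w.length_edges]; omega)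
  obtain ⟨a, b, i, hab, hstar⟩ :=
    HasRunningIntersection.exists_star_subset (C := C) hrip hE hcov
  obtain ⟨c, hcb, hac⟩ := hw.exists_ne_mem_edges hab
  exact hw.not_adj_of_isChordless hch hlen hab hac
    ((hmax i).1 (hstar hab) (hstar hac) hcb.symm)

/-- If the maximal cliques of a connected graph `G` admit an ordering with the
running intersection property, then `G` is chordal. -/
theorem rip_implies_chordal {V : Type*} [Fintype V] (G : SimpleGraph V)
    (hconn : G.Connected) (m : ℕ) (C : Fin m → Set V)
    (hmax : ∀ i, IsMaxClique G (C i))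
    (hall : ∀ s : Set V, IsMaxClique G s → ∃ i, C i = s)
    (hrip : ∀ i : Fin m, 0 < (i : ℕ) →
      ∃ j, j < i ∧ (C i ∩ ⋃ k < i, C k) ⊆ C j) :
    IsChordal G :=
  rip_implies_chordal_general G m C hmax hall hrip
end

section
/- The MFCF construction adds vertices in reverse perfect elimination order: if a graph is grown by repeated clique expansions starting from cliques whose vertices are in reverse perfect elimination order, and the vertex sequence is extended by the vertices in the order they are attached, then the reverse of this sequence is a perfect elimination order of the final graph. -/
open SimpleGraph

/-- `σ` is a perfect elimination order of `G` if for every vertex `σ i`, its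
neighbours among the later vertices `σ j`, `j > i`, form a complete subgraph. -/
def IsPEO {V : Type*} (G : SimpleGraph V) {n : ℕ} (σ : Fin n ≃ V) : Prop :=
  ∀ i : Fin n, G.IsClique {u | G.Adj (σ i) u ∧ ∃ j, i < j ∧ σ j = u}

/-! Reversing the order turns the later neighbours of a vertex into the neighbours added
before it, and under clique expansion these are exactly the clique it was attached to. -/

theorem isPEO_revPerm_trans_iff {V : Type*} (G : SimpleGraph V) {n : ℕ} (w : Fin n ≃ V) :
    IsPEO G (Fin.revPerm.trans w) ↔
      ∀ k : Fin n, G.IsClique {u | G.Adj (w k) u ∧ ∃ j, j < k ∧ w j = u} := by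
  refine Fin.revPerm.forall_congr fun {i} => ?_
  suffices h : ∀ u, (∃ j, i < j ∧ w j.rev = u) ↔ ∃ j, j < i.rev ∧ w j = u by
    simp [h]
  intro u
  refine Fin.revPerm.exists_congr fun {j} => ?_
  simp [Fin.rev_lt_rev]

theorem earlierNeighbors_eq_of_cliqueExpansion {V : Type*} (G : SimpleGraph V) {n : ℕ}
    (w : Fin n ≃ V) (S : Fin n → Set V)
    (hSprev : ∀ i : Fin n, S i ⊆ {u | ∃ j, j < i ∧ w j = u})
    (hedges : ∀ a b : V, G.Adj a b ↔
      ∃ i : Fin n, (a = w i ∧ b ∈ S i) ∨ (b = w i ∧ a ∈ S i))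
    (k : Fin n) :
    {u | G.Adj (w k) u ∧ ∃ j, j < k ∧ w j = u} = S k := by
  ext u
  constructor
  · rintro ⟨hadj, j, hjk, rfl⟩
    obtain ⟨i, ⟨hki, _⟩ | ⟨hji, hk⟩⟩ := (hedges _ _).mp hadj
    · rwa [w.injective hki]
    -- `w k ∈ S i` forces `k < i`, while `w j = w i` with `j < k`.
    · obtain ⟨m, hmi, hmk⟩ := hSprev i hk
      rw [w.injective hmk] at hmi
      rw [w.injective hji] at hjk
      exact absurd (hjk.trans hmi) (lt_irrefl _)
  · intro hu
    exact ⟨(hedges _ _).mpr ⟨k, Or.inl ⟨rfl, hu⟩⟩, hSprev k hu⟩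

theorem mfcf_reverse_peo_general {V : Type*} (G : SimpleGraph V)
    (n : ℕ) (w : Fin n ≃ V) (S : Fin n → Set V)
    (hSprev : ∀ i : Fin n, S i ⊆ {u | ∃ j, j < i ∧ w j = u})
    (hScomplete : ∀ i : Fin n, G.IsClique (S i))
    (hedges : ∀ a b : V, G.Adj a b ↔
      ∃ i : Fin n, (a = w i ∧ b ∈ S i) ∨ (b = w i ∧ a ∈ S i)) :
    IsPEO G (Fin.revPerm.trans w) := by
  rw [isPEO_revPerm_trans_iff]
  intro k
  rw [earlierNeighbors_eq_of_cliqueExpansion G w S hSprev hedges k]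
  exact hScomplete k

/-- The MFCF construction adds vertices in reverse perfect elimination order: if
the edges of `G` arise by attaching each vertex `w i`, in order, to a complete
set `S i` of previously added vertices (clique expansion), then the reverse of
the addition order is a perfect elimination order of the final graph. -/
theorem mfcf_reverse_peo {V : Type*} [Fintype V] (G : SimpleGraph V)
    (n : ℕ) (w : Fin n ≃ V) (S : Fin n → Set V)
    (hSprev : ∀ i : Fin n, S i ⊆ {u | ∃ j, j < i ∧ w j = u})
    (hScomplete : ∀ i : Fin n, G.IsClique (S i))
    (hedges : ∀ a b : V, G.Adj a b ↔
      ∃ i : Fin n, (a = w i ∧ b ∈ S i) ∨ (b = w i ∧ a ∈ S i)) :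
    IsPEO G (Fin.revPerm.trans w) :=
  mfcf_reverse_peo_general G n w S hSprev hScomplete hedges
end

section
/- The clique-tree shrinkage target matrix is positive definite: if each clique-level matrix Σ̂̂_c (and each separator-level matrix Σ̂̂_s) is positive definite, then the matrix Ĵ = Σ_{c∈𝒞} [((1−θ)Σ̂_c + θΣ̂̂_c)^{-1}]^V − Σ_{s∈𝒮} [((1−θ)Σ̂_s + θΣ̂̂_s)^{-1}]^V is the precision matrix of a valid (positive-definite) covariance, given that the convex combinations (1−θ)Σ̂_c + θΣ̂̂_c with θ ∈ [0,1] of positive-definite matrices are positive definite. -/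
open Matrix

/-- The principal submatrix of `M` on the index set `c`. -/
def subm {n : ℕ} (M : Matrix (Fin n) (Fin n) ℝ) (c : Finset (Fin n)) :
    Matrix ↥c ↥c ℝ :=
  fun i j => M (i : Fin n) (j : Fin n)

/-- Embed a matrix indexed by `c` into an `n × n` matrix padded with zeros. -/
def embed {n : ℕ} (c : Finset (Fin n)) (M : Matrix ↥c ↥c ℝ) :
    Matrix (Fin n) (Fin n) ℝ :=
  fun i j => if hi : i ∈ c then (if hj : j ∈ c then M ⟨i, hi⟩ ⟨j, hj⟩ else 0) else 0

/-!
Put `M = (1 - θ) Σ̂ + θ Σ̂̂`, which is positive definite, and `q_c(x) = x_cᵀ (M_c)⁻¹ x_c`, so that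
`xᵀ Ĵ x = Σ_i (q_{C i}(x) - q_{S i}(x))`. For `s ⊆ t` one has `q_s ≤ q_t`, because
`q_s(x) = max_w (2 wᵀx - wᵀ M w)` over `w` supported on `s`; as `S i ⊆ C i`, every summand is
nonnegative. For `x ≠ 0` take the first clique `C i₀` on which `x` does not vanish: `S i₀` only
meets earlier cliques, so `q_{S i₀}(x) = 0 < q_{C i₀}(x)`.
-/

lemma Matrix.PosDef.one_sub_smul_add_smul {ι : Type*} [Fintype ι] {A B : Matrix ι ι ℝ}
    (hA : A.PosDef) (hB : B.PosDef) {θ : ℝ} (hθ0 : 0 ≤ θ) (hθ1 : θ ≤ 1) :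
    ((1 - θ) • A + θ • B).PosDef := by
  rcases hθ1.lt_or_eq with hθ | rfl
  · exact (hA.smul (sub_pos.2 hθ)).add_posSemidef (hB.posSemidef.smul hθ0)
  · simpa using hB

lemma Matrix.PosDef.mulVec_inv_mulVec {ι : Type*} [Fintype ι] [DecidableEq ι]
    {A : Matrix ι ι ℝ} (hA : A.PosDef) (y : ι → ℝ) : A *ᵥ (A⁻¹ *ᵥ y) = y := by
  rw [mulVec_mulVec, mul_nonsing_inv _ (A.isUnit_iff_isUnit_det.1 hA.isUnit), one_mulVec]

lemma Matrix.PosDef.two_mul_dotProduct_sub_le_dotProduct_inv_mulVec {ι : Type*} [Fintype ι]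
    [DecidableEq ι] {A : Matrix ι ι ℝ} (hA : A.PosDef) (w y : ι → ℝ) :
    2 * (w ⬝ᵥ y) - w ⬝ᵥ (A *ᵥ w) ≤ y ⬝ᵥ (A⁻¹ *ᵥ y) := by
  set z := A⁻¹ *ᵥ y
  have hz : A *ᵥ z = y := hA.mulVec_inv_mulVec y
  have hAt : Aᵀ = A := by rw [← conjTranspose_eq_transpose_of_trivial]; exact hA.1
  have hzw : z ⬝ᵥ (A *ᵥ w) = y ⬝ᵥ w := by
    rw [dotProduct_mulVec, ← mulVec_transpose, hAt, hz]
  have hnonneg := hA.posSemidef.dotProduct_mulVec_nonneg (w - z)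
  rw [star_trivial, mulVec_sub, dotProduct_sub, sub_dotProduct, sub_dotProduct, hz, hzw,
    dotProduct_comm y w] at hnonneg
  show _ ≤ y ⬝ᵥ z
  rw [dotProduct_comm y z]
  linarith

section Blocks

variable {n : ℕ}

def restrictTo (x : Fin n → ℝ) (s : Finset (Fin n)) : s → ℝ := fun i => x i

def extendZero (s : Finset (Fin n)) (y : s → ℝ) : Fin n → ℝ :=
  fun i => if h : i ∈ s then y ⟨i, h⟩ else 0

lemma extendZero_dotProduct (s : Finset (Fin n)) (y : s → ℝ) (v : Fin n → ℝ) :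
    extendZero s y ⬝ᵥ v = y ⬝ᵥ restrictTo v s := by
  classical
  calc extendZero s y ⬝ᵥ v = ∑ i ∈ s, extendZero s y i * v i :=
        (Finset.sum_subset (Finset.subset_univ s) fun i _ hi => by simp [extendZero, hi]).symm
    _ = ∑ i : s, y i * restrictTo v s i := by
        rw [← Finset.sum_attach, Finset.univ_eq_attach]
        exact Finset.sum_congr rfl fun i _ => by simp [extendZero, restrictTo]

lemma dotProduct_extendZero (s : Finset (Fin n)) (y : s → ℝ) (v : Fin n → ℝ) :
    v ⬝ᵥ extendZero s y = restrictTo v s ⬝ᵥ y := by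
  rw [dotProduct_comm, extendZero_dotProduct, dotProduct_comm]

lemma extendZero_restrictTo_of_subset {s t : Finset (Fin n)} (hst : s ⊆ t) (y : s → ℝ) :
    extendZero t (restrictTo (extendZero s y) t) = extendZero s y := by
  funext i
  by_cases hs : i ∈ s
  · simp [extendZero, restrictTo, hs, hst hs]
  · by_cases ht : i ∈ t <;> simp [extendZero, restrictTo, hs, ht]

lemma restrictTo_mulVec_extendZero (A : Matrix (Fin n) (Fin n) ℝ) (s : Finset (Fin n))
    (y : s → ℝ) : restrictTo (A *ᵥ extendZero s y) s = subm A s *ᵥ y := by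
  funext i
  exact dotProduct_extendZero s y fun j => A i j

lemma extendZero_dotProduct_mulVec (A : Matrix (Fin n) (Fin n) ℝ) (s : Finset (Fin n))
    (y : s → ℝ) : extendZero s y ⬝ᵥ (A *ᵥ extendZero s y) = y ⬝ᵥ (subm A s *ᵥ y) := by
  rw [extendZero_dotProduct, restrictTo_mulVec_extendZero]

lemma embed_mulVec (s : Finset (Fin n)) (N : Matrix s s ℝ) (x : Fin n → ℝ) :
    embed s N *ᵥ x = extendZero s (N *ᵥ restrictTo x s) := by
  funext i
  by_cases hi : i ∈ s
  · have hrow : (fun j => embed s N i j) = extendZero s fun j => N ⟨i, hi⟩ j := by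
      funext j
      by_cases hj : j ∈ s <;> simp [embed, extendZero, hi, hj]
    show (fun j => embed s N i j) ⬝ᵥ x = _
    rw [hrow, extendZero_dotProduct]
    simp [extendZero, hi, mulVec]
  · simp [embed, extendZero, hi, mulVec, dotProduct]

lemma dotProduct_embed_mulVec (s : Finset (Fin n)) (N : Matrix s s ℝ) (x : Fin n → ℝ) :
    x ⬝ᵥ (embed s N *ᵥ x) = restrictTo x s ⬝ᵥ (N *ᵥ restrictTo x s) := by
  rw [embed_mulVec, dotProduct_extendZero]

lemma Matrix.IsHermitian.embed {s : Finset (Fin n)} {N : Matrix s s ℝ} (hN : N.IsHermitian) :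
    (embed s N).IsHermitian := by
  ext i j
  by_cases hi : i ∈ s <;> by_cases hj : j ∈ s <;> simp [conjTranspose_apply, _root_.embed, hi, hj]
  exact congrFun (congrFun hN ⟨i, hi⟩) ⟨j, hj⟩

lemma Matrix.PosDef.subm {A : Matrix (Fin n) (Fin n) ℝ} (hA : A.PosDef) (s : Finset (Fin n)) :
    (_root_.subm A s).PosDef :=
  hA.submatrix Subtype.val_injective

noncomputable def blockInvQuad (A : Matrix (Fin n) (Fin n) ℝ) (s : Finset (Fin n))
    (x : Fin n → ℝ) : ℝ :=
  restrictTo x s ⬝ᵥ ((subm A s)⁻¹ *ᵥ restrictTo x s)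

lemma blockInvQuad_mono {A : Matrix (Fin n) (Fin n) ℝ} (hA : A.PosDef) {s t : Finset (Fin n)}
    (hst : s ⊆ t) (x : Fin n → ℝ) : blockInvQuad A s x ≤ blockInvQuad A t x := by
  set z := (subm A s)⁻¹ *ᵥ restrictTo x s
  have hz : subm A s *ᵥ z = restrictTo x s := (hA.subm s).mulVec_inv_mulVec _
  set w := restrictTo (extendZero s z) t
  -- `extendZero s z` attains the maximum of `2 vᵀx - vᵀ A v` over `v` supported on `s`
  calc blockInvQuad A s x = 2 * (z ⬝ᵥ restrictTo x s) - z ⬝ᵥ (subm A s *ᵥ z) := by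
        rw [hz, dotProduct_comm z, blockInvQuad]; ring
    _ = 2 * (extendZero s z ⬝ᵥ x) - extendZero s z ⬝ᵥ (A *ᵥ extendZero s z) := by
        rw [extendZero_dotProduct, extendZero_dotProduct_mulVec]
    _ = 2 * (w ⬝ᵥ restrictTo x t) - w ⬝ᵥ (subm A t *ᵥ w) := by
        rw [← extendZero_dotProduct, ← extendZero_dotProduct_mulVec,
          extendZero_restrictTo_of_subset hst]
    _ ≤ blockInvQuad A t x := (hA.subm t).two_mul_dotProduct_sub_le_dotProduct_inv_mulVec _ _

lemma blockInvQuad_pos {A : Matrix (Fin n) (Fin n) ℝ} (hA : A.PosDef) {s : Finset (Fin n)}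
    {x : Fin n → ℝ} (hx : restrictTo x s ≠ 0) : 0 < blockInvQuad A s x := by
  have hpos := (hA.subm s).inv.dotProduct_mulVec_pos hx
  rwa [star_trivial] at hpos

lemma dotProduct_sum_embed_inv_sub_mulVec {κ : Type*} [Fintype κ] (A : Matrix (Fin n) (Fin n) ℝ)
    (C S : κ → Finset (Fin n)) (x : Fin n → ℝ) :
    x ⬝ᵥ ((∑ i, embed (C i) (subm A (C i))⁻¹ - ∑ i, embed (S i) (subm A (S i))⁻¹) *ᵥ x)
      = ∑ i, (blockInvQuad A (C i) x - blockInvQuad A (S i) x) := by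
  simp only [sub_mulVec, sum_mulVec, dotProduct_sub, dotProduct_sum, dotProduct_embed_mulVec,
    Finset.sum_sub_distrib, blockInvQuad]

theorem posDef_sum_embed_inv_sub_sum_embed_inv {κ : Type*} [Fintype κ] [LinearOrder κ]
    {A : Matrix (Fin n) (Fin n) ℝ} (hA : A.PosDef) (C S : κ → Finset (Fin n))
    (hcover : ∀ v, ∃ i, v ∈ C i) (hSC : ∀ i, S i ⊆ C i)
    (hSearlier : ∀ i, ∀ v ∈ S i, ∃ j < i, v ∈ C j) :
    (∑ i, embed (C i) (subm A (C i))⁻¹ - ∑ i, embed (S i) (subm A (S i))⁻¹).PosDef := by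
  have hherm : ∀ D : κ → Finset (Fin n), (∑ i, embed (D i) (subm A (D i))⁻¹).IsHermitian :=
    fun D => isSelfAdjoint_sum _ fun i _ => (hA.subm (D i)).inv.isHermitian.embed
  refine posDef_iff_dotProduct_mulVec.2 ⟨(hherm C).sub (hherm S), fun x hx => ?_⟩
  rw [star_trivial, dotProduct_sum_embed_inv_sub_mulVec]
  obtain ⟨v, hv⟩ := Function.ne_iff.mp hx
  obtain ⟨iv, hiv⟩ := hcover v
  obtain ⟨i₀, hi₀, hfirst⟩ := wellFounded_lt.has_min {i | restrictTo x (C i) ≠ 0}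
    ⟨iv, Function.ne_iff.mpr ⟨⟨v, hiv⟩, hv⟩⟩
  have hS₀ : blockInvQuad A (S i₀) x = 0 := by
    suffices restrictTo x (S i₀) = 0 by rw [blockInvQuad, this, zero_dotProduct]
    funext ⟨u, hu⟩
    obtain ⟨j, hj, huj⟩ := hSearlier i₀ u hu
    have hCj : restrictTo x (C j) = 0 := not_not.mp fun h => hfirst j h hj
    exact congrFun hCj ⟨u, huj⟩
  refine Finset.sum_pos' (fun i _ => sub_nonneg.2 (blockInvQuad_mono hA (hSC i) x))
    ⟨i₀, Finset.mem_univ _, ?_⟩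
  rw [hS₀, sub_zero]
  exact blockInvQuad_pos hA hi₀

end Blocks

theorem clique_tree_shrinkage_posdef_general {n m : ℕ}
    (Sig Tar : Matrix (Fin n) (Fin n) ℝ)
    (hSig : Sig.PosDef) (hTar : Tar.PosDef)
    (θ : ℝ) (hθ0 : 0 ≤ θ) (hθ1 : θ ≤ 1)
    (C : Fin m → Finset (Fin n))
    (hcover : ∀ v, ∃ i, v ∈ C i)
    (S : Fin m → Finset (Fin n))
    (hS : ∀ i, S i = C i ∩ (Finset.univ.filter (· < i)).biUnion C) :
    (∑ i : Fin m,
        embed (C i) ((1 - θ) • subm Sig (C i) + θ • subm Tar (C i))⁻¹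
      - ∑ i : Fin m,
        embed (S i) ((1 - θ) • subm Sig (S i) + θ • subm Tar (S i))⁻¹).PosDef := by
  have hblock : ∀ s, (1 - θ) • subm Sig s + θ • subm Tar s = subm ((1 - θ) • Sig + θ • Tar) s :=
    fun _ => rfl
  simp only [hblock]
  refine posDef_sum_embed_inv_sub_sum_embed_inv (hSig.one_sub_smul_add_smul hTar hθ0 hθ1) C S
    hcover (fun i => hS i ▸ Finset.inter_subset_left) fun i v hv => ?_
  rw [hS i] at hv
  simpa using (Finset.mem_inter.1 hv).2

/-- The clique-tree shrinkage target construction gives a valid precision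
matrix: given a clique forest with cliques `C i` and separators
`S i = C i ∩ (C 0 ∪ ⋯ ∪ C (i-1))`, positive-definite matrices `Sig` (sample
covariance) and `Tar` (shrinkage target), and `θ ∈ [0,1]`, the matrix
`Ĵ = Σ_c [((1−θ)Σ̂_c + θΣ̂̂_c)⁻¹]^V − Σ_s [((1−θ)Σ̂_s + θΣ̂̂_s)⁻¹]^V`
is positive definite, i.e. it is the precision matrix of a valid
(positive-definite) covariance. -/
theorem clique_tree_shrinkage_posdef {n m : ℕ}
    (Sig Tar : Matrix (Fin n) (Fin n) ℝ)
    (hSig : Sig.PosDef) (hTar : Tar.PosDef)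
    (θ : ℝ) (hθ0 : 0 ≤ θ) (hθ1 : θ ≤ 1)
    (C : Fin m → Finset (Fin n))
    (hcover : ∀ v, ∃ i, v ∈ C i)
    (hrip : ∀ i : Fin m, 0 < (i : ℕ) →
      ∃ j, j < i ∧ (C i ∩ (Finset.univ.filter (· < i)).biUnion C) ⊆ C j)
    (S : Fin m → Finset (Fin n))
    (hS : ∀ i, S i = C i ∩ (Finset.univ.filter (· < i)).biUnion C) :
    (∑ i : Fin m,
        embed (C i) ((1 - θ) • subm Sig (C i) + θ • subm Tar (C i))⁻¹
      - ∑ i : Fin m,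
        embed (S i) ((1 - θ) • subm Sig (S i) + θ • subm Tar (S i))⁻¹).PosDef :=
  clique_tree_shrinkage_posdef_general Sig Tar hSig hTar θ hθ0 hθ1 C hcover S hS
end

section
/- The last vertex added in a reverse perfect elimination construction is simplicial: if σ = [v_1, ..., v_n] is a perfect elimination order of a chordal graph G, then the neighborhood of v_1 in G is a complete subgraph (v_1 is simplicial in G). Moreover, every chordal graph with at least one vertex has a simplicial vertex. -/
open SimpleGraph

/-!
Dirac's argument, in the form "for every clique `K ≠ V` of a finite chordal graph there is a
simplicial vertex outside `K`", by induction on the number of vertices. If `G` is complete any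
vertex outside `K` will do. Otherwise pick a non-universal vertex `a` adjacent to all of `K`, a
non-neighbour `b`, and the component `C` of `b` in `G - N[a]`. The common neighbours `S` of `a`
and `C` form a clique: for non-adjacent `x, y ∈ S`, a shortest `x`–`y` path through `C` closes up
through `a` into a chordless cycle of length at least `4`. Every neighbour of `C` lies in
`C ∪ S`, which misses `a`, so induction applied to `G[C ∪ S]` and the clique `S` gives a vertex of
`C` that is simplicial in `G[C ∪ S]`, hence in `G`; it lies outside `K ⊆ N[a]`.
-/

section

variable {V : Type*} {G : SimpleGraph V}

namespace SimpleGraph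

def IsSimplicial (G : SimpleGraph V) (v : V) : Prop :=
  G.IsClique (G.neighborSet v)

theorem IsSimplicial.of_induce {s : Set V} {v : s} (hv : (G.induce s).IsSimplicial v)
    (hs : G.neighborSet v ⊆ s) : G.IsSimplicial v := by
  intro x hx y hy hxy
  exact hv (show (G.induce s).Adj v ⟨x, hs hx⟩ from hx)
    (show (G.induce s).Adj v ⟨y, hs hy⟩ from hy) (fun h => hxy (congrArg Subtype.val h))

theorem IsClique.exists_forall_adj_not_adj {K : Set V} (hK : G.IsClique K)
    (hG : G ≠ ⊤) : ∃ a b, a ≠ b ∧ ¬G.Adj a b ∧ ∀ k ∈ K, k ≠ a → G.Adj a k := by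
  by_cases hKu : ∃ k ∈ K, ∃ b, k ≠ b ∧ ¬G.Adj k b
  · obtain ⟨k, hk, b, hkb, hnkb⟩ := hKu
    exact ⟨k, b, hkb, hnkb, fun k' hk' hne => hK hk hk' hne.symm⟩
  push Not at hKu
  obtain ⟨a, b, hab, hnab⟩ : ∃ a b, a ≠ b ∧ ¬G.Adj a b := by
    by_contra! h
    exact hG (by ext x y; rw [top_adj]; exact ⟨Adj.ne, h x y⟩)
  exact ⟨a, b, hab, hnab, fun k hk hka => (hKu k hk a hka).symm⟩

namespace Walk

def IsShortestIn {x y : V} (p : G.Walk x y) (T : Set V) : Prop :=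
  (∀ z ∈ p.support, z ∈ T) ∧ ∀ q : G.Walk x y, (∀ z ∈ q.support, z ∈ T) → p.length ≤ q.length

theorem exists_isShortestIn {x y : V} {T : Set V} (p : G.Walk x y)
    (hp : ∀ z ∈ p.support, z ∈ T) : ∃ q : G.Walk x y, q.IsShortestIn T := by
  classical
  have hex : ∃ n, ∃ q : G.Walk x y, (∀ z ∈ q.support, z ∈ T) ∧ q.length = n := ⟨_, p, hp, rfl⟩
  obtain ⟨q, hqT, hq⟩ := Nat.find_spec hex
  exact ⟨q, hqT, fun r hr => hq ▸ Nat.find_min' hex ⟨r, hr, rfl⟩⟩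

theorem IsShortestIn.isPath {x y : V} {T : Set V} {p : G.Walk x y} (hp : p.IsShortestIn T) :
    p.IsPath := by
  classical
  rw [← bypass_eq_self_of_length_le_length_bypass p
    (hp.2 _ fun z hz => hp.1 z (p.support_bypass_subset_support hz))]
  exact p.bypass_isPath

theorem IsShortestIn.mem_edges_of_adj {T : Set V} :
    ∀ {x y : V} {p : G.Walk x y}, p.IsShortestIn T → ∀ u ∈ p.support, ∀ v ∈ p.support,
      G.Adj u v → s(u, v) ∈ p.edges
  | _, _, .nil, _, u, hu, v, hv, huv => by
    simp only [support_nil, List.mem_singleton] at hu hv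
    exact absurd (hu.trans hv.symm) huv.ne
  | x, y, .cons (v := x₁) h p, ⟨hT, hmin⟩, u, hu, v, hv, huv => by
    classical
    have hxT : x ∈ T := hT x (start_mem_support _)
    have hpT : ∀ z ∈ p.support, z ∈ T := fun z hz => hT z (List.mem_cons_of_mem _ hz)
    have hp : p.IsShortestIn T := ⟨hpT, fun q hq => by
      simpa using hmin (.cons h q) (by simpa [hxT] using hq)⟩
    -- a neighbour of `x` further along `p` than `x₁` would give a shortcut
    have hnext : ∀ w ∈ p.support, G.Adj x w → w = x₁ := by
      intro w hw hxw
      by_contra hne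
      have := hmin (.cons hxw (p.dropUntil w hw)) (by
        simpa [hxT] using fun z hz => hpT z (p.support_dropUntil_subset_support hw hz))
      have := length_dropUntil_lt_length hw hne
      simp only [length_cons] at *
      omega
    simp only [support_cons, List.mem_cons, edges_cons] at hu hv ⊢
    rcases hu with rfl | hu <;> rcases hv with rfl | hv
    · exact absurd huv (G.loopless.irrefl _)
    · exact .inl (by rw [hnext v hv huv])
    · exact .inl (by rw [hnext u hu huv.symm, Sym2.eq_swap])
    · exact .inr (hp.mem_edges_of_adj u hu v hv huv)

end Walk

theorem exists_closed_connected_induce (R : Set V) {b : V} (hb : b ∈ R) :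
    ∃ C ⊆ R, b ∈ C ∧ (G.induce C).Connected ∧ ∀ c ∈ C, ∀ z ∈ R, G.Adj c z → z ∈ C := by
  classical
  set C : Set V := {z | ∃ p : G.Walk b z, ∀ w ∈ p.support, w ∈ R}
  have hprefix : ∀ {z} (p : G.Walk b z), (∀ w ∈ p.support, w ∈ R) → ∀ w ∈ p.support, w ∈ C :=
    fun p hp w hw => ⟨p.takeUntil w hw,
      fun u hu => hp u (p.support_takeUntil_subset_support hw hu)⟩
  have hbC : b ∈ C := ⟨.nil, by simpa using hb⟩
  refine ⟨C, fun z ⟨p, hp⟩ => hp z p.end_mem_support, hbC, ?_, ?_⟩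
  · refine G.induce_connected_of_patches b hbC fun {v} ⟨p, hp⟩ => ?_
    exact ⟨{w | w ∈ p.support}, hprefix p hp, p.start_mem_support, p.end_mem_support,
      p.connected_induce_support.preconnected _ _⟩
  · rintro c ⟨p, hp⟩ z hz hcz
    exact ⟨p.concat hcz, by simpa [Walk.support_concat, or_imp, forall_and, hz] using hp⟩

end SimpleGraph

theorem IsPEO.isSimplicial_of_forall_le {n : ℕ} {σ : Fin n ≃ V} (hσ : IsPEO G σ) {i : Fin n}
    (hi : ∀ j, i ≤ j) : G.IsSimplicial (σ i) := by
  refine (hσ i).subset fun u (hu : G.Adj (σ i) u) => ?_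
  refine ⟨hu, σ.symm u, (hi _).lt_of_ne fun h => ?_, σ.apply_symm_apply u⟩
  exact G.loopless.irrefl _ (by rwa [h, σ.apply_symm_apply] at hu)

theorem IsChordal.of_embedding {W : Type*} {H : SimpleGraph W} (f : H ↪g G)
    (hG : IsChordal G) : IsChordal H := by
  intro v w hw hlen
  obtain ⟨c, d, hc, hd, hcd, hcdw⟩ := hG (f v) (w.map f.toHom) (hw.map f.injective)
    (by rwa [Walk.length_map])
  simp only [Walk.support_map, List.mem_map] at hc hd
  obtain ⟨c, hc, rfl⟩ := hc
  obtain ⟨d, hd, rfl⟩ := hd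
  refine ⟨c, d, hc, hd, f.map_adj_iff.1 hcd, fun h => hcdw ?_⟩
  rw [Walk.edges_map]
  exact List.mem_map_of_mem (f := Sym2.map f) h

theorem IsChordal.induce (hG : IsChordal G) (s : Set V) : IsChordal (G.induce s) :=
  hG.of_embedding (Embedding.induce s)

theorem IsChordal.adj_of_isPath (hG : IsChordal G) {a x y : V} {P : G.Walk x y} (hP : P.IsPath)
    (hchordless : ∀ u ∈ P.support, ∀ v ∈ P.support, G.Adj u v → s(u, v) ∈ P.edges)
    (haP : a ∉ P.support) (hax : G.Adj a x) (hay : G.Adj a y)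
    (hinner : ∀ z ∈ P.support, G.Adj a z → z = x ∨ z = y) (hxy : x ≠ y) : G.Adj x y := by
  by_contra hnxy
  have hlen : 2 ≤ P.length := by
    by_contra! h
    interval_cases hP' : P.length
    · exact hxy (Walk.eq_of_length_eq_zero hP')
    · exact hnxy (Walk.adj_of_length_eq_one hP')
  set W : G.Walk y y := .cons hay.symm (.cons hax P)
  have hW : W.IsCycle := by
    rw [Walk.cons_isCycle_iff, Walk.cons_isPath_iff]
    refine ⟨⟨hP, haP⟩, ?_⟩
    rw [Walk.edges_cons, List.mem_cons, not_or]
    refine ⟨fun h => ?_, fun h => haP (P.snd_mem_support_of_mem_edges h)⟩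
    rcases Sym2.eq_iff.1 h with ⟨hya, -⟩ | ⟨hyx, -⟩
    exacts [hay.ne hya.symm, hxy hyx.symm]
  have hedge : ∀ u ∈ P.support, G.Adj a u → s(a, u) ∈ W.edges := by
    intro u hu hau
    rcases hinner u hu hau with rfl | rfl <;> simp [W, Sym2.eq_swap]
  obtain ⟨c, d, hc, hd, hcd, hcdW⟩ := hG y W hW (by simp [W]; omega)
  have hmem : ∀ u ∈ W.support, u = a ∨ u ∈ P.support := by
    simp only [W, Walk.support_cons, List.mem_cons]
    rintro u (rfl | rfl | hu)
    exacts [.inr P.end_mem_support, .inl rfl, .inr hu]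
  rcases hmem c hc with rfl | hcP <;> rcases hmem d hd with rfl | hdP
  · exact G.loopless.irrefl _ hcd
  · exact hcdW (hedge d hdP hcd)
  · exact hcdW (Sym2.eq_swap ▸ hedge c hcP hcd.symm)
  · exact hcdW (by simpa [W] using .inr (.inr (hchordless c hcP d hdP hcd)))

theorem IsChordal.isClique_adj_inter_adj (hG : IsChordal G) {a : V} {C : Set V}
    (hC : (G.induce C).Preconnected) (haC : ∀ c ∈ C, c ≠ a ∧ ¬G.Adj a c) :
    G.IsClique {s | G.Adj a s ∧ ∃ c ∈ C, G.Adj s c} := by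
  rintro x ⟨hax, cx, hcx, hxcx⟩ y ⟨hay, cy, hcy, hycy⟩ hxy
  obtain ⟨w⟩ := hC ⟨cx, hcx⟩ ⟨cy, hcy⟩
  obtain ⟨q, hqC⟩ : ∃ q : G.Walk cx cy, ∀ z ∈ q.support, z ∈ C :=
    ⟨w.map (Embedding.induce C).toHom, fun z hz => by
      obtain ⟨z, -, rfl⟩ := List.mem_map.1 ((w.support_map (Embedding.induce C).toHom) ▸ hz)
      exact z.2⟩
  obtain ⟨P, hP⟩ := Walk.exists_isShortestIn (T := insert x (insert y C))
    (.cons hxcx (q.concat hycy.symm)) (by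
      simpa [Walk.support_concat, or_imp, forall_and] using fun z hz => .inr (.inr (hqC z hz)))
  have hPT : ∀ z ∈ P.support, z = x ∨ z = y ∨ z ∈ C := hP.1
  refine hG.adj_of_isPath hP.isPath hP.mem_edges_of_adj (fun haP => ?_) hax hay
    (fun z hz haz => ?_) hxy
  · rcases hPT a haP with h | h | h
    exacts [hax.ne h, hay.ne h, (haC a h).1 rfl]
  · exact (hPT z hz).imp_right fun h => h.resolve_right fun hzC => (haC z hzC).2 haz

theorem IsChordal.exists_isSimplicial_notMem [Finite V] (hG : IsChordal G) {K : Set V}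
    (hK : G.IsClique K) (hKV : K ≠ Set.univ) : ∃ v ∉ K, G.IsSimplicial v := by
  induction hn : Nat.card V using Nat.strong_induction_on generalizing V with
  | _ n ih =>
  obtain ⟨v, hv⟩ := (Set.ne_univ_iff_exists_notMem K).1 hKV
  by_cases htop : G = ⊤
  · subst htop
    exact ⟨v, hv, fun x _ y _ hxy => hxy⟩
  obtain ⟨a, b, hab, hnab, haK⟩ := hK.exists_forall_adj_not_adj htop
  obtain ⟨C, hCR, hbC, hC, hCclosed⟩ :=
    G.exists_closed_connected_induce {z | z ≠ a ∧ ¬G.Adj a z} ⟨hab.symm, hnab⟩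
  set S := {s | G.Adj a s ∧ ∃ c ∈ C, G.Adj s c}
  have hS : G.IsClique S := hG.isClique_adj_inter_adj hC.preconnected hCR
  have hnbr : ∀ c ∈ C, G.neighborSet c ⊆ C ∪ S := by
    intro c hc z hcz
    by_cases hz : z ≠ a ∧ ¬G.Adj a z
    · exact .inl (hCclosed c hc z hz hcz)
    · refine .inr ⟨?_, c, hc, hcz.symm⟩
      push Not at hz
      exact hz (fun hza => (hCR hc).2 (hza ▸ hcz.symm))
  have haT : a ∉ C ∪ S := by
    rintro (h | h)
    exacts [(hCR h).1 rfl, G.loopless.irrefl _ h.1]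
  obtain ⟨u, huS, hu⟩ := ih _ (hn ▸ Finite.card_subtype_lt haT) (hG.induce (C ∪ S))
    (K := {x : ↥(C ∪ S) | (x : V) ∈ S}) (fun x hx y hy hxy =>
      hS (show (x : V) ∈ S from hx) (show (y : V) ∈ S from hy) (Subtype.coe_injective.ne hxy))
    ((Set.ne_univ_iff_exists_notMem _).2 ⟨⟨b, .inl hbC⟩, fun h => hnab h.1⟩) rfl
  have huC : ↑u ∈ C := u.2.resolve_right huS
  exact ⟨u, fun huK => (hCR huC).2 (haK u huK (hCR huC).1), hu.of_induce (hnbr u huC)⟩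

end

/-- In a chordal graph with at least one vertex: the first vertex of any
perfect elimination order is simplicial (its whole neighbourhood is complete),
and a simplicial vertex always exists. -/
theorem simplicial_vertex_exists {V : Type*} [Fintype V] (G : SimpleGraph V)
    (hG : IsChordal G) (hne : Nonempty V) :
    (∀ σ : Fin (Fintype.card V) ≃ V, IsPEO G σ →
      G.IsClique (G.neighborSet (σ ⟨0, Fintype.card_pos⟩))) ∧
    ∃ v : V, G.IsClique (G.neighborSet v) := by
  refine ⟨fun σ hσ => hσ.isSimplicial_of_forall_le fun j => Nat.zero_le j, ?_⟩
  obtain ⟨v, -, hv⟩ := hG.exists_isSimplicial_notMem isClique_empty Set.empty_ne_univ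
  exact ⟨v, hv⟩
end
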